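/- Let K ⊆ ℝ² be a compact set which is invisible from every point of the plane and whose orthogonal projection onto the line spanned by any unit vector not parallel to (1,0) has one-dimensional Lebesgue measure zero. Let ℒ(K) be the dual family of K and L(K) = ⋃ℒ(K). Then L(K) has two-dimensional Lebesgue measure zero, and for every line e ⊆ ℝ² with e ∉ ℒ(K), the intersection e ∩ L(K) has one-dimensional Hausdorff measure zero. -/

import Mathlib

/-!
A point `q` lies on `l(w)` iff `q₁ = w₀ q₀ + w₁`. Hence the vertical section of `L(K)` at
abscissa `x` is `{⟪w, (x, 1)⟫ : w ∈ K}`, a rescaled orthogonal projection of `K` in a non-vertical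
direction, so it is null; as `L(K)` is closed, Fubini gives `|L(K)| = 0`, and the same sections
settle the vertical lines `e`. A non-vertical line `e = l(v)` with `v ∉ K` meets `l(w)` at
abscissa `-(w - v)₁ / (w - v)₀`, minus the slope of the direction from `v` to `w`. This is a
locally Lipschitz function of the radial projection of `w` from `v`, so invisibility of `K` from
`v` makes the set of these abscissae, and with it `e ∩ L(K)`, `H¹`-null.
-/

open MeasureTheory Set Metric
open scoped ENNReal Real

noncomputable section

abbrev Plane : Type := EuclideanSpace ℝ (Fin 2)

/-- The point (a, b) of the plane. -/
def pt (a b : ℝ) : Plane := (WithLp.equiv 2 (Fin 2 → ℝ)).symm ![a, b]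

/-- The line `y = a x + b`. -/
def lineAB (a b : ℝ) : Set Plane := {p | p 1 = a * p 0 + b}

/-- The dual family of lines of a set `K ⊆ ℝ²`. -/
def dualLines (K : Set Plane) : Set (Set Plane) := {e | ∃ p ∈ K, e = lineAB (p 0) (p 1)}

/-- The union of the dual family of `K`. -/
def dualUnion (K : Set Plane) : Set Plane := ⋃₀ dualLines K

/-- The orthogonal projection of `A` onto the line spanned by `u`, as a subset of `ℝ`. -/
def orthProj (u : Plane) (A : Set Plane) : Set ℝ := (fun x => (inner ℝ x u : ℝ)) '' A

/-- The radial projection of `A` from the point `v`, a subset of the unit circle `S¹ ⊆ ℝ²`. -/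
def radialProj (v : Plane) (A : Set Plane) : Set Plane :=
  {y | ∃ x ∈ A, x ≠ v ∧ y = ‖x - v‖⁻¹ • (x - v)}

/-- A line in `ℝ²`. -/
def IsLine (e : Set Plane) : Prop :=
  ∃ p u : Plane, u ≠ 0 ∧ e = {q | ∃ t : ℝ, q = p + t • u}

open scoped Pointwise

theorem LocallyLipschitzOn.hausdorffMeasure_image_eq_zero {X Y : Type*} [EMetricSpace X]
    [MeasurableSpace X] [BorelSpace X] [SecondCountableTopology X] [EMetricSpace Y]
    [MeasurableSpace Y] [BorelSpace Y] {f : X → Y} {s : Set X} {d : ℝ}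
    (hf : LocallyLipschitzOn s f) (hd : 0 ≤ d) (hs : μH[d] s = 0) : μH[d] (f '' s) = 0 := by
  choose! C t htn hC using fun x (hx : x ∈ s) => hf hx
  obtain ⟨u, hus, huc, hcover⟩ := TopologicalSpace.countable_cover_nhdsWithin htn
  have hsplit : f '' s ⊆ ⋃ x ∈ u, f '' (s ∩ t x) := by
    rintro _ ⟨y, hy, rfl⟩
    obtain ⟨x, hx, hyx⟩ := mem_iUnion₂.1 (hcover hy)
    exact mem_iUnion₂.2 ⟨x, hx, y, ⟨hy, hyx⟩, rfl⟩
  refine measure_mono_null hsplit ((measure_biUnion_null_iff huc).2 fun x hx => ?_)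
  refine le_antisymm ?_ bot_le
  calc μH[d] (f '' (s ∩ t x)) ≤ C x ^ d * μH[d] (s ∩ t x) :=
        ((hC x (hus hx)).mono inter_subset_right).hausdorffMeasure_image_le hd
    _ = 0 := by rw [measure_mono_null inter_subset_left hs, mul_zero]

@[simp] lemma pt_apply_zero (a b : ℝ) : pt a b 0 = a := rfl

@[simp] lemma pt_apply_one (a b : ℝ) : pt a b 1 = b := rfl

lemma plane_ext {q r : Plane} (h0 : q 0 = r 0) (h1 : q 1 = r 1) : q = r := by
  ext i; fin_cases i <;> assumption

@[simp] lemma pt_apply_zero_apply_one (q : Plane) : pt (q 0) (q 1) = q := plane_ext rfl rfl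

lemma inner_pt (w : Plane) (a b : ℝ) : inner ℝ w (pt a b) = w 0 * a + w 1 * b := by
  simp [PiLp.inner_apply, Fin.sum_univ_two, mul_comm]

lemma norm_pt (a b : ℝ) : ‖pt a b‖ = √(a ^ 2 + b ^ 2) := by
  simp [EuclideanSpace.norm_eq, Fin.sum_univ_two]

lemma lineMap_pt (a₀ b₀ a₁ b₁ x : ℝ) : AffineMap.lineMap (pt a₀ b₀) (pt a₁ b₁) x =
    pt (a₀ + x * (a₁ - a₀)) (b₀ + x * (b₁ - b₀)) := by
  rw [AffineMap.lineMap_apply_module']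
  exact plane_ext (show x * (a₁ - a₀) + a₀ = a₀ + x * (a₁ - a₀) by ring)
    (show x * (b₁ - b₀) + b₀ = b₀ + x * (b₁ - b₀) by ring)

lemma hausdorffMeasure_image_lineMap_eq_zero {s : Set ℝ} (p q : Plane) (hs : volume s = 0) :
    μH[1] (AffineMap.lineMap p q '' s) = 0 := by
  rw [hausdorffMeasure_lineMap_image, hausdorffMeasure_real, hs, smul_zero]

lemma volume_eq_zero_of_forall_volume_section {s : Set Plane} (hs : MeasurableSet s)
    (h : ∀ x, volume {y | pt x y ∈ s} = 0) : volume s = 0 := by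
  let e : Plane ≃ᵐ ℝ × ℝ :=
    (MeasurableEquiv.toLp 2 (Fin 2 → ℝ)).symm.trans MeasurableEquiv.finTwoArrow
  have he : MeasurePreserving e.symm :=
    ((volume_preserving_finTwoArrow ℝ).comp
      (EuclideanSpace.volume_preserving_symm_measurableEquiv_toLp (Fin 2))).symm _
  rw [← he.measure_preimage hs.nullMeasurableSet, Measure.volume_eq_prod,
    Measure.measure_prod_null (e.symm.measurable hs)]
  exact Filter.Eventually.of_forall h

lemma IsLine.eq_vertical_or_eq_lineAB {e : Set Plane} (he : IsLine e) :
    (∃ c, e = {q | q 0 = c}) ∨ ∃ a b, e = lineAB a b := by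
  obtain ⟨p, u, hu, rfl⟩ := he
  have hcoord (t : ℝ) (i : Fin 2) : (p + t • u) i = p i + t * u i := rfl
  by_cases hu0 : u 0 = 0
  · have hu1 : u 1 ≠ 0 := fun hu1 => hu (plane_ext (by simpa using hu0) (by simpa using hu1))
    refine Or.inl ⟨p 0, Set.ext fun q => ⟨?_, fun hq => ⟨(q 1 - p 1) / u 1, plane_ext ?_ ?_⟩⟩⟩
    · rintro ⟨t, rfl⟩
      simp [hcoord, hu0]
    · simpa [hcoord, hu0] using hq
    · rw [hcoord]; field_simp; ring
  · refine Or.inr ⟨u 1 / u 0, p 1 - u 1 / u 0 * p 0, Set.ext fun q => ⟨?_, fun hq => ?_⟩⟩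
    · rintro ⟨t, rfl⟩
      simp only [lineAB, mem_ofPred_eq, hcoord]; field_simp; ring
    · refine ⟨(q 0 - p 0) / u 0, plane_ext ?_ ?_⟩
      · rw [hcoord]; field_simp; ring
      · rw [hcoord, show q 1 = _ from hq]; field_simp; ring

def dualSlice (K : Set Plane) (x : ℝ) : Set ℝ := (fun w : Plane => w 0 * x + w 1) '' K

lemma mem_dualUnion_iff {K : Set Plane} {q : Plane} :
    q ∈ dualUnion K ↔ q 1 ∈ dualSlice K (q 0) := by
  constructor
  · rintro ⟨e, ⟨w, hw, rfl⟩, hq⟩; exact ⟨w, hw, hq.symm⟩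
  · rintro ⟨w, hw, hq⟩; exact ⟨_, ⟨w, hw, rfl⟩, hq.symm⟩

lemma isClosed_dualUnion {K : Set Plane} (hK : IsCompact K) : IsClosed (dualUnion K) := by
  have := isCompact_iff_compactSpace.1 hK
  have hsnd : dualUnion K = Prod.snd ''
      {wq : K × Plane | wq.2 1 = (wq.1 : Plane) 0 * wq.2 0 + (wq.1 : Plane) 1} := by
    ext q
    simp [mem_dualUnion_iff, dualSlice, eq_comm]
  rw [hsnd]
  exact isClosedMap_snd_of_compactSpace _ (isClosed_eq (by fun_prop) (by fun_prop))

lemma dualSlice_eq_smul_orthProj (K : Set Plane) (x : ℝ) :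
    dualSlice K x = √(x ^ 2 + 1) • orthProj ((√(x ^ 2 + 1))⁻¹ • pt x 1) K := by
  have hr : √(x ^ 2 + 1) ≠ 0 := by positivity
  rw [orthProj, ← image_smul, image_image]
  refine image_congr fun w _ => ?_
  rw [inner_smul_right, inner_pt, smul_eq_mul, mul_inv_cancel_left₀ hr, mul_one]

lemma volume_dualSlice_eq_zero {K : Set Plane}
    (hproj : ∀ u : Plane, ‖u‖ = 1 → (¬ ∃ t : ℝ, u = t • pt 1 0) → volume (orthProj u K) = 0)
    (x : ℝ) : volume (dualSlice K x) = 0 := by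
  have hr : 0 < √(x ^ 2 + 1) := by positivity
  have hunit : ‖(√(x ^ 2 + 1))⁻¹ • pt x 1‖ = 1 := by
    rw [norm_smul, norm_pt, one_pow, Real.norm_of_nonneg (inv_nonneg.2 hr.le),
      inv_mul_cancel₀ hr.ne']
  have hnonvert : ¬ ∃ t : ℝ, (√(x ^ 2 + 1))⁻¹ • pt x 1 = t • pt 1 0 := by
    rintro ⟨t, ht⟩
    simpa [hr.ne'] using congrArg (· 1) ht
  rw [dualSlice_eq_smul_orthProj, Measure.addHaar_smul, hproj _ hunit hnonvert, mul_zero]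

lemma volume_dualUnion_eq_zero {K : Set Plane} (hK : IsCompact K)
    (hslice : ∀ x, volume (dualSlice K x) = 0) : volume (dualUnion K) = 0 :=
  volume_eq_zero_of_forall_volume_section (isClosed_dualUnion hK).measurableSet fun x => by
    simpa [mem_dualUnion_iff] using hslice x

lemma hausdorffMeasure_vertical_inter_dualUnion {K : Set Plane} {c : ℝ}
    (hslice : volume (dualSlice K c) = 0) : μH[1] ({q | q 0 = c} ∩ dualUnion K) = 0 := by
  have hvert : {q | q 0 = c} ∩ dualUnion K =
      AffineMap.lineMap (pt c 0) (pt c 1) '' dualSlice K c := by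
    ext q
    simp only [mem_inter_iff, mem_ofPred_eq, mem_dualUnion_iff, mem_image, lineMap_pt]
    constructor
    · rintro ⟨rfl, hq⟩
      exact ⟨q 1, hq, by simp⟩
    · rintro ⟨y, hy, rfl⟩
      simpa using hy
  rw [hvert]
  exact hausdorffMeasure_image_lineMap_eq_zero _ _ hslice

lemma lineAB_inter_dualUnion (K : Set Plane) (a b : ℝ) : lineAB a b ∩ dualUnion K =
    AffineMap.lineMap (pt 0 b) (pt 1 (a + b)) '' {x | a * x + b ∈ dualSlice K x} := by
  ext q
  simp only [lineAB, mem_inter_iff, mem_ofPred_eq, mem_dualUnion_iff, mem_image, lineMap_pt]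
  constructor
  · rintro ⟨hq, hqK⟩
    refine ⟨q 0, hq ▸ hqK, plane_ext (by simp) ?_⟩
    simp only [pt_apply_one, hq]
    ring
  · rintro ⟨x, hx, rfl⟩
    simp only [pt_apply_zero, pt_apply_one, sub_zero, mul_one, zero_add, add_sub_cancel_right]
    rw [mul_comm x a, add_comm b]
    exact ⟨rfl, hx⟩

lemma setOf_mem_dualSlice_subset_image_radialProj {K : Set Plane} {a b : ℝ} (hv : pt a b ∉ K) :
    {x | a * x + b ∈ dualSlice K x} ⊆
      (fun z : Plane => -z 1 / z 0) '' (radialProj (pt a b) K ∩ {z | z 0 ≠ 0}) := by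
  rintro x ⟨w, hw, hx : w 0 * x + w 1 = a * x + b⟩
  have hwv : w ≠ pt a b := fun h => hv (h ▸ hw)
  have hw0 : w 0 ≠ a := fun h =>
    hwv (plane_ext h (by rw [h] at hx; simp only [pt_apply_one]; linarith))
  have hr : ‖w - pt a b‖⁻¹ ≠ 0 := inv_ne_zero (norm_ne_zero_iff.2 (sub_ne_zero.2 hwv))
  refine ⟨‖w - pt a b‖⁻¹ • (w - pt a b), ⟨⟨w, hw, hwv, rfl⟩, ?_⟩, ?_⟩
  · simpa [hr] using sub_ne_zero.2 hw0
  · simp only [PiLp.smul_apply, PiLp.sub_apply, pt_apply_zero, pt_apply_one, smul_eq_mul]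
    rw [← mul_neg, mul_div_mul_left _ _ hr, div_eq_iff (sub_ne_zero.2 hw0)]
    linarith

lemma locallyLipschitzOn_neg_div {s : Set Plane} (hs : ∀ z ∈ s, z 0 ≠ 0) :
    LocallyLipschitzOn s (fun z : Plane => -z 1 / z 0) := by
  intro z hz
  have hdiff : ContDiffAt ℝ 1 (fun z : Plane => -z 1 / z 0) z := by
    fun_prop (disch := exact hs z hz)
  obtain ⟨C, t, ht, hC⟩ := hdiff.exists_lipschitzOnWith
  exact ⟨C, t, mem_nhdsWithin_of_mem_nhds ht, hC⟩

lemma hausdorffMeasure_lineAB_inter_dualUnion {K : Set Plane} {a b : ℝ} (hv : pt a b ∉ K)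
    (hinv : μH[1] (radialProj (pt a b) K) = 0) : μH[1] (lineAB a b ∩ dualUnion K) = 0 := by
  have hslopes : μH[1] ((fun z : Plane => -z 1 / z 0) ''
      (radialProj (pt a b) K ∩ {z | z 0 ≠ 0})) = 0 :=
    (locallyLipschitzOn_neg_div fun _ hz => hz.2).hausdorffMeasure_image_eq_zero zero_le_one
      (measure_mono_null inter_subset_left hinv)
  rw [lineAB_inter_dualUnion]
  refine hausdorffMeasure_image_lineMap_eq_zero _ _ ?_
  rw [← hausdorffMeasure_real]
  exact measure_mono_null (setOf_mem_dualSlice_subset_image_radialProj hv) hslopes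

/-- If `K ⊆ ℝ²` is compact, invisible from every point of the plane, and all its orthogonal
projections in non-vertical directions (i.e. onto lines spanned by unit vectors not parallel to
`(1,0)`) are Lebesgue-null, then the union `L(K)` of the dual family of `K` has two-dimensional
Lebesgue measure zero, and every line `e ∉ ℒ(K)` meets `L(K)` in a set of 1-dimensional
Hausdorff measure zero. -/
theorem dual_of_invisible_is_small (K : Set Plane) (hK : IsCompact K)
    (hinv : ∀ v : Plane, μH[1] (radialProj v K) = 0)
    (hproj : ∀ u : Plane, ‖u‖ = 1 → (¬ ∃ t : ℝ, u = t • pt 1 0) →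
      volume (orthProj u K) = 0) :
    volume (dualUnion K) = 0 ∧
    ∀ e : Set Plane, IsLine e → e ∉ dualLines K → μH[1] (e ∩ dualUnion K) = 0 := by
  have hslice := volume_dualSlice_eq_zero hproj
  refine ⟨volume_dualUnion_eq_zero hK hslice, fun e he heK => ?_⟩
  obtain ⟨c, rfl⟩ | ⟨a, b, rfl⟩ := he.eq_vertical_or_eq_lineAB
  · exact hausdorffMeasure_vertical_inter_dualUnion (hslice c)
  · exact hausdorffMeasure_lineAB_inter_dualUnion (fun hv => heK ⟨_, hv, rfl⟩) (hinv _)
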